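/- Let H and L be real Hilbert spaces, Φ : H → L a bounded linear operator with adjoint Φ*, A ⊆ H a symmetric set containing 0 (e.g. a union of linear subspaces), y ∈ L, μ > 0 and α > 0 with 1/μ < 1.5·α. Assume for all x₁, x₂ ∈ A: α‖x₁ + x₂‖² ≤ ‖Φ(x₁ + x₂)‖² ≤ (1/μ)‖x₁ + x₂‖². Let (xⁿ) be a sequence with x⁰ = 0 and, for each n, xⁿ⁺¹ ∈ A a best approximation in A to xⁿ + μΦ*(y − Φxⁿ). Then for every x_A ∈ A and every k ∈ ℕ: ‖x_A − x^k‖² ≤ (2(1/(μα) − 1))^k·‖x_A‖² + c·‖y − Φx_A‖², where c = 4/(3α − 2/μ). -/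

import Mathlib

/-!
Let `u = xⁿ⁺¹ - x_A` and `v = xⁿ - x_A`. Since `xⁿ⁺¹` is a best approximation in `A` to the
Landweber point `a = xⁿ + μΦ*(y - Φxⁿ)` and `x_A ∈ A`, we get `‖u‖² ≤ 2⟪u, a - x_A⟫`. Expanding
`a - x_A = v + μΦ*(y - Φx_A - Φv)` and polarizing, the lower bi-Lipschitz bound on `u` and `v`, the
upper one on `u - v` (these are differences of points of the symmetric set `A`) and Young's
inequality for the residual `y - Φx_A` give `‖u‖² ≤ γ‖v‖² + (4/α)‖y - Φx_A‖²` with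
`γ = 2(1/(μα) - 1) ∈ [0, 1)`. Unrolling this recursion, the residual terms sum to at most
`(4/α)/(1 - γ) = 4/(3α - 2/μ)`. When `1/μ < α` the bi-Lipschitz bound forces `A = {0}`.
-/

open scoped RealInnerProductSpace InnerProduct

section BiLipschitz

variable {H L : Type*} [NormedAddCommGroup H] [InnerProductSpace ℝ H]
  [NormedAddCommGroup L] [InnerProductSpace ℝ L]

theorem norm_sub_sq_le_two_inner_of_norm_sub_le {p q a : H} (h : ‖p - a‖ ≤ ‖q - a‖) :
    ‖p - q‖ ^ 2 ≤ 2 * ⟪p - q, a - q⟫ := by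
  have hsq : ‖(p - q) - (a - q)‖ ^ 2 ≤ ‖a - q‖ ^ 2 := by
    rw [sub_sub_sub_cancel_right, norm_sub_rev a q]
    gcongr
  linarith [norm_sub_sq_real (p - q) (a - q)]

def IsBiLipschitzOn (Φ : H →L[ℝ] L) (A : Set H) (α β : ℝ) : Prop :=
  ∀ x₁ ∈ A, ∀ x₂ ∈ A,
    α * ‖x₁ + x₂‖ ^ 2 ≤ ‖Φ (x₁ + x₂)‖ ^ 2 ∧ ‖Φ (x₁ + x₂)‖ ^ 2 ≤ β * ‖x₁ + x₂‖ ^ 2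

namespace IsBiLipschitzOn

variable {Φ : H →L[ℝ] L} {A : Set H} {α β : ℝ}

theorem sub (h : IsBiLipschitzOn Φ A α β) (hsym : ∀ x ∈ A, -x ∈ A) {x₁ x₂ : H} (h₁ : x₁ ∈ A)
    (h₂ : x₂ ∈ A) :
    α * ‖x₁ - x₂‖ ^ 2 ≤ ‖Φ (x₁ - x₂)‖ ^ 2 ∧ ‖Φ (x₁ - x₂)‖ ^ 2 ≤ β * ‖x₁ - x₂‖ ^ 2 := by
  simpa only [sub_eq_add_neg] using h x₁ h₁ (-x₂) (hsym x₂ h₂)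

theorem eq_zero_of_lt (h : IsBiLipschitzOn Φ A α β) (hβα : β < α) {x : H} (hx : x ∈ A) :
    x = 0 := by
  have hle := (h x hx x hx).1.trans (h x hx x hx).2
  have hxx : ‖x + x‖ ^ 2 ≤ 0 := by nlinarith [sq_nonneg ‖x + x‖]
  have h2x : (2 : ℝ) • x = 0 := by
    rw [two_smul, ← norm_eq_zero]
    exact (pow_eq_zero_iff two_ne_zero).mp (le_antisymm hxx (sq_nonneg _))
  exact (smul_eq_zero.mp h2x).resolve_left two_ne_zero

end IsBiLipschitzOn

variable [CompleteSpace H] [CompleteSpace L]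

noncomputable def landweberStep (Φ : H →L[ℝ] L) (y : L) (μ : ℝ) (q : H) : H :=
  q + μ • (Φ†) (y - Φ q)

theorem norm_sub_sq_le_of_norm_sub_landweberStep_le (Φ : H →L[ℝ] L) {μ α : ℝ} (hμ : 0 < μ)
    (hα : 0 < α) {p q x : H} (y : L)
    (hproj : ‖p - landweberStep Φ y μ q‖ ≤ ‖x - landweberStep Φ y μ q‖)
    (hp : α * ‖p - x‖ ^ 2 ≤ ‖Φ (p - x)‖ ^ 2) (hq : α * ‖q - x‖ ^ 2 ≤ ‖Φ (q - x)‖ ^ 2)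
    (hpq : ‖Φ (p - q)‖ ^ 2 ≤ (1 / μ) * ‖p - q‖ ^ 2) :
    ‖p - x‖ ^ 2 ≤ 2 * (1 / (μ * α) - 1) * ‖q - x‖ ^ 2 + 4 / α * ‖y - Φ x‖ ^ 2 := by
  set u := p - x
  set v := q - x
  set e := y - Φ x
  have hinner : ⟪u, landweberStep Φ y μ q - x⟫ = ⟪u, v⟫ + μ * ⟪Φ u, e⟫ - μ * ⟪Φ u, Φ v⟫ := by
    have hres : y - Φ q = e - Φ v := by simp only [v, e, map_sub]; abel
    have hstep : landweberStep Φ y μ q - x = v + μ • (Φ†) (e - Φ v) := by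
      rw [landweberStep, hres]; simp only [v]; abel
    rw [hstep, inner_add_right, real_inner_smul_right, ContinuousLinearMap.adjoint_inner_right,
      inner_sub_right (Φ u)]
    ring
  have hdesc := norm_sub_sq_le_two_inner_of_norm_sub_le hproj
  rw [hinner] at hdesc
  have polarH := norm_sub_sq_real u v
  have polarL : ‖Φ (u - v)‖ ^ 2 = ‖Φ u‖ ^ 2 - 2 * ⟪Φ u, Φ v⟫ + ‖Φ v‖ ^ 2 := by
    rw [map_sub, norm_sub_sq_real]
  have young : 2 * ⟪Φ u, e⟫ ≤ ‖Φ u‖ ^ 2 / 2 + 2 * ‖e‖ ^ 2 := by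
    nlinarith [real_inner_le_norm (Φ u) e, sq_nonneg (‖Φ u‖ - 2 * ‖e‖)]
  rw [show p - q = u - v by simp only [u, v, sub_sub_sub_cancel_right]] at hpq
  have hμpq : μ * ‖Φ (u - v)‖ ^ 2 ≤ ‖u - v‖ ^ 2 :=
    calc μ * ‖Φ (u - v)‖ ^ 2 ≤ μ * ((1 / μ) * ‖u - v‖ ^ 2) := by gcongr
      _ = ‖u - v‖ ^ 2 := by field_simp
  have key : μ * α / 2 * ‖u‖ ^ 2 ≤ (1 - μ * α) * ‖v‖ ^ 2 + 2 * μ * ‖e‖ ^ 2 := by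
    nlinarith [mul_le_mul_of_nonneg_left young hμ.le]
  rw [← mul_le_mul_iff_right₀ (half_pos (mul_pos hμ hα))]
  calc μ * α / 2 * ‖u‖ ^ 2 ≤ (1 - μ * α) * ‖v‖ ^ 2 + 2 * μ * ‖e‖ ^ 2 := key
    _ = μ * α / 2 * (2 * (1 / (μ * α) - 1) * ‖v‖ ^ 2 + 4 / α * ‖e‖ ^ 2) := by
      field_simp
      ring

end BiLipschitz

theorem le_pow_mul_add_div_of_le_mul_add {d : ℕ → ℝ} {γ b : ℝ} (hγ₀ : 0 ≤ γ) (hγ₁ : γ < 1)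
    (hb : 0 ≤ b) (hd : ∀ n, d (n + 1) ≤ γ * d n + b) (k : ℕ) :
    d k ≤ γ ^ k * d 0 + b / (1 - γ) := by
  have h1γ : 0 < 1 - γ := sub_pos.mpr hγ₁
  have hgeom : ∀ k, d k ≤ γ ^ k * d 0 + b * (1 - γ ^ k) / (1 - γ) := by
    intro k
    induction k with
    | zero => simp
    | succ k ih =>
      calc d (k + 1) ≤ γ * d k + b := hd k
        _ ≤ γ * (γ ^ k * d 0 + b * (1 - γ ^ k) / (1 - γ)) + b := by gcongr
        _ = γ ^ (k + 1) * d 0 + b * (1 - γ ^ (k + 1)) / (1 - γ) := by field_simp; ring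
  calc d k ≤ γ ^ k * d 0 + b * (1 - γ ^ k) / (1 - γ) := hgeom k
    _ ≤ γ ^ k * d 0 + b / (1 - γ) := by
      gcongr
      nlinarith [pow_nonneg hγ₀ k]

/-- geometric convergence of the Iterative Projection Algorithm iterates. -/
theorem stmt_7
    {H L : Type*} [NormedAddCommGroup H] [InnerProductSpace ℝ H] [CompleteSpace H]
    [NormedAddCommGroup L] [InnerProductSpace ℝ L] [CompleteSpace L]
    (Φ : H →L[ℝ] L) (A : Set H)
    (hzero : (0 : H) ∈ A) (hsym : ∀ x ∈ A, -x ∈ A)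
    (y : L) (μ α : ℝ) (hμ : 0 < μ) (hα : 0 < α) (hcond : 1 / μ < 1.5 * α)
    (hbi : ∀ x₁ ∈ A, ∀ x₂ ∈ A,
      α * ‖x₁ + x₂‖ ^ 2 ≤ ‖Φ (x₁ + x₂)‖ ^ 2 ∧ ‖Φ (x₁ + x₂)‖ ^ 2 ≤ (1 / μ) * ‖x₁ + x₂‖ ^ 2)
    (xseq : ℕ → H) (hinit : xseq 0 = 0)
    (hstep : ∀ n, xseq (n + 1) ∈ A ∧ ∀ z ∈ A,
      ‖xseq (n + 1) - (xseq n + μ • (ContinuousLinearMap.adjoint Φ) (y - Φ (xseq n)))‖ ≤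
      ‖z - (xseq n + μ • (ContinuousLinearMap.adjoint Φ) (y - Φ (xseq n)))‖) :
    ∀ xA ∈ A, ∀ k : ℕ,
      ‖xA - xseq k‖ ^ 2 ≤
        (2 * (1 / (μ * α) - 1)) ^ k * ‖xA‖ ^ 2 + (4 / (3 * α - 2 / μ)) * ‖y - Φ xA‖ ^ 2 := by
  intro xA hxA k
  have hbi : IsBiLipschitzOn Φ A α (1 / μ) := hbi
  have hA : ∀ n, xseq n ∈ A := by
    rintro (_ | n)
    exacts [hinit ▸ hzero, (hstep n).1]
  have hden : 0 < 3 * α - 2 / μ := by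
    rw [show 2 / μ = 2 * (1 / μ) by ring]; linarith
  rcases lt_or_ge (1 / μ) α with hlt | hle
  · rw [hbi.eq_zero_of_lt hlt hxA, hbi.eq_zero_of_lt hlt (hA k)]
    simp only [sub_self, norm_zero, map_zero, sub_zero, zero_pow two_ne_zero, mul_zero, zero_add]
    positivity
  have hγ₀ : 0 ≤ 2 * (1 / (μ * α) - 1) := by
    have := one_le_one_div (mul_pos hμ hα) (by rwa [le_div_iff₀' hμ] at hle)
    linarith
  have hγ₁ : 2 * (1 / (μ * α) - 1) < 1 := by
    have : 1 / μ / α < 1.5 := by rwa [div_lt_iff₀ hα]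
    rw [div_div] at this
    linarith
  have step (n : ℕ) : ‖xA - xseq (n + 1)‖ ^ 2 ≤
      2 * (1 / (μ * α) - 1) * ‖xA - xseq n‖ ^ 2 + 4 / α * ‖y - Φ xA‖ ^ 2 := by
    rw [norm_sub_rev xA, norm_sub_rev xA]
    exact norm_sub_sq_le_of_norm_sub_landweberStep_le Φ hμ hα y ((hstep n).2 xA hxA)
      (hbi.sub hsym (hA _) hxA).1 (hbi.sub hsym (hA _) hxA).1 (hbi.sub hsym (hA _) (hA n)).2
  have hsum : 4 / α * ‖y - Φ xA‖ ^ 2 / (1 - 2 * (1 / (μ * α) - 1)) =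
      4 / (3 * α - 2 / μ) * ‖y - Φ xA‖ ^ 2 := by
    field_simp
    ring
  simpa only [hinit, sub_zero, hsum] using
    le_pow_mul_add_div_of_le_mul_add (d := fun n => ‖xA - xseq n‖ ^ 2) hγ₀ hγ₁ (by positivity)
      step k
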